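/- For every m ∈ (0,1), the quantity 3E(m)² + (1−m)K(m)² + 2(m−2)E(m)K(m) is strictly negative, where K and E are the complete elliptic integrals of the first and second kind with parameter m. -/

import Mathlib

open Real

/-- Complete elliptic integral of the first kind with parameter m (square of the modulus). -/
noncomputable def Kel (m : ℝ) : ℝ :=
  ∫ θ in (0:ℝ)..(Real.pi/2), 1 / Real.sqrt (1 - m * Real.sin θ ^ 2)

/-- Complete elliptic integral of the second kind with parameter m. -/
noncomputable def Eel (m : ℝ) : ℝ :=
  ∫ θ in (0:ℝ)..(Real.pi/2), Real.sqrt (1 - m * Real.sin θ ^ 2)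

/-!
Let `F(m) = 3E² + (1 - m)K² + 2(m - 2)EK`; then `F(0) = 0` since `E(0) = K(0) = π/2`.
Differentiating under the integral sign, and integrating the derivative of
`sin θ cos θ / √(1 - m sin²θ)` over `[0, π/2]`, gives Legendre's formulas
`E' = (E - K) / (2m)` and `K' = (E - (1 - m)K) / (2m(1 - m))`, whence
`F' = ((1 - m)K - E) ((1 - m)(K - E) + mE) / (m(1 - m))`.
The elementary bounds `(1 - m)K < E < K` make the first factor negative and the second positive,
so `F` decreases strictly on `[0, 1)`.
-/

open Set intervalIntegral Metric

lemma one_sub_mul_sin_sq_pos {m : ℝ} (hm : m < 1) (θ : ℝ) : 0 < 1 - m * sin θ ^ 2 := by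
  rcases le_or_gt m 0 with h | h
  · nlinarith [sq_nonneg (sin θ)]
  · nlinarith [sin_sq_le_one θ]

lemma hasDerivAt_integral_comp_one_sub_mul_sin_sq {φ φ' : ℝ → ℝ}
    (hφ : ∀ t, 0 < t → HasDerivAt φ (φ' t) t) (hφ' : ContinuousOn φ' (Ioi 0)) {m : ℝ}
    (hm : m < 1) :
    HasDerivAt (fun x => ∫ θ in (0:ℝ)..π / 2, φ (1 - x * sin θ ^ 2))
      (∫ θ in (0:ℝ)..π / 2, -(sin θ ^ 2 * φ' (1 - m * sin θ ^ 2))) m := by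
  have hcont : ∀ x < 1, Continuous fun θ => φ (1 - x * sin θ ^ 2) := fun x hx =>
    continuous_iff_continuousAt.2 fun θ =>
      ContinuousAt.comp (f := fun θ => 1 - x * sin θ ^ 2)
        (hφ _ (one_sub_mul_sin_sq_pos hx θ)).continuousAt (by fun_prop)
  obtain ⟨r, hr, hball⟩ : ∃ r > 0, ∀ x ∈ closedBall m r, x < 1 :=
    ⟨(1 - m) / 2, by linarith, fun x hx => by
      linarith [(abs_le.1 (mem_closedBall_iff_norm.1 hx)).2]⟩
  obtain ⟨C, hC⟩ := (isCompact_closedBall m r |>.prod isCompact_Icc).exists_bound_of_continuousOn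
    (f := fun p : ℝ × ℝ => -(sin p.2 ^ 2 * φ' (1 - p.1 * sin p.2 ^ 2))) (by
      refine ((continuous_sin.comp continuous_snd).pow 2).continuousOn.mul
        (hφ'.comp (by fun_prop) fun p hp => one_sub_mul_sin_sq_pos (hball _ hp.1) _) |>.neg)
  refine (hasDerivAt_integral_of_dominated_loc_of_deriv_le (μ := MeasureTheory.volume)
    (F := fun x θ => φ (1 - x * sin θ ^ 2)) (F' := fun x θ => -(sin θ ^ 2 * φ' (1 - x * sin θ ^ 2)))
    (bound := fun _ => C)
    (ball_mem_nhds m hr) ?_ ((hcont m hm).intervalIntegrable _ _) ?_ ?_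
    intervalIntegrable_const ?_).2
  · filter_upwards [Iio_mem_nhds hm] with x hx
    exact (hcont x hx).aestronglyMeasurable
  · exact ((continuous_sin.pow 2).mul (hφ'.comp_continuous (by fun_prop)
      (one_sub_mul_sin_sq_pos hm))).neg.aestronglyMeasurable
  · refine Filter.Eventually.of_forall fun θ hθ x hx => hC (x, θ) ⟨ball_subset_closedBall hx, ?_⟩
    exact Ioc_subset_Icc_self (uIoc_of_le (by positivity : (0:ℝ) ≤ π / 2) ▸ hθ)
  · refine Filter.Eventually.of_forall fun θ _ x hx => ?_
    have hu := (hφ _ (one_sub_mul_sin_sq_pos (hball x (ball_subset_closedBall hx)) θ)).comp x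
      (((hasDerivAt_id x).mul_const (sin θ ^ 2)).const_sub 1)
    exact hu.congr_deriv (by ring)

lemma integral_sin_sq_div_pos {g : ℝ → ℝ} (hg : Continuous g) (hpos : ∀ θ, 0 < g θ) :
    0 < ∫ θ in (0:ℝ)..π / 2, sin θ ^ 2 / g θ := by
  refine intervalIntegral_pos_of_pos_on
    ((by fun_prop (disch := exact fun θ => (hpos θ).ne') : Continuous _).intervalIntegrable _ _)
    (fun θ hθ => ?_) (by positivity)
  have := sin_pos_of_pos_of_lt_pi hθ.1 (by linarith [hθ.2, pi_pos])
  have := hpos θ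
  positivity

lemma Kel_sub_Eel {m : ℝ} (hm : m < 1) :
    Kel m - Eel m = m * ∫ θ in (0:ℝ)..π / 2, sin θ ^ 2 / √(1 - m * sin θ ^ 2) := by
  have hu := one_sub_mul_sin_sq_pos hm
  rw [Kel, Eel, ← integral_sub, ← integral_const_mul]
  · refine integral_congr fun θ _ => ?_
    have := sqrt_pos.2 (hu θ)
    have := sq_sqrt (hu θ).le
    field_simp
    rw [this]
    ring
  all_goals
    exact Continuous.intervalIntegrable
      (by fun_prop (disch := exact fun θ => (sqrt_pos.2 (hu θ)).ne')) _ _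

lemma hasDerivAt_sin_mul_cos_div_sqrt {m : ℝ} (hm : m < 1) (θ : ℝ) :
    HasDerivAt (fun t => sin t * cos t / √(1 - m * sin t ^ 2))
      ((1 - 2 * sin θ ^ 2 + m * sin θ ^ 4) / ((1 - m * sin θ ^ 2) * √(1 - m * sin θ ^ 2))) θ := by
  have hu := one_sub_mul_sin_sq_pos hm θ
  have hnum := (hasDerivAt_sin θ).mul (hasDerivAt_cos θ)
  have hden := (hasDerivAt_sqrt hu.ne').comp θ
    ((((hasDerivAt_sin θ).pow 2).const_mul m).const_sub 1)
  refine (hnum.div hden (sqrt_pos.2 hu).ne').congr_deriv ?_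
  have hr := sqrt_pos.2 hu
  have hr2 := sq_sqrt hu.le
  have hc := cos_sq' θ
  simp only [Function.comp_apply, Pi.mul_apply, Pi.pow_apply]
  set r := √(1 - m * sin θ ^ 2)
  rw [← hr2]
  field_simp
  linear_combination 2 * (cos θ ^ 2 - sin θ ^ 2) * hr2 + 2 * hc

/-- `sin θ cos θ / √(1 - m sin²θ)` vanishes at `0` and `π / 2`, and `m` times its derivative is
`√u - (1 - m) / √u - m (1 - m) sin²θ / (u √u)` with `u = 1 - m sin²θ`. -/
lemma Eel_sub_mul_Kel {m : ℝ} (hm : m < 1) :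
    Eel m - (1 - m) * Kel m =
      m * (1 - m) *
        ∫ θ in (0:ℝ)..π / 2, sin θ ^ 2 / ((1 - m * sin θ ^ 2) * √(1 - m * sin θ ^ 2)) := by
  have hu := one_sub_mul_sin_sq_pos hm
  have hcont : ∀ {f : ℝ → ℝ}, Continuous f → IntervalIntegrable f MeasureTheory.volume 0 (π / 2) :=
    fun hf => hf.intervalIntegrable _ _
  have hG : ∫ θ in (0:ℝ)..π / 2, (1 - 2 * sin θ ^ 2 + m * sin θ ^ 4) /
      ((1 - m * sin θ ^ 2) * √(1 - m * sin θ ^ 2)) = 0 := by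
    rw [integral_eq_sub_of_hasDerivAt (fun θ _ => hasDerivAt_sin_mul_cos_div_sqrt hm θ)
      (hcont (by fun_prop (disch := intro θ; have := hu θ; positivity)))]
    simp
  have key : ∫ θ in (0:ℝ)..π / 2, (√(1 - m * sin θ ^ 2) - (1 - m) * (1 / √(1 - m * sin θ ^ 2))
        - m * (1 - m) * (sin θ ^ 2 / ((1 - m * sin θ ^ 2) * √(1 - m * sin θ ^ 2)))) =
      ∫ θ in (0:ℝ)..π / 2, m * ((1 - 2 * sin θ ^ 2 + m * sin θ ^ 4) /
        ((1 - m * sin θ ^ 2) * √(1 - m * sin θ ^ 2))) := by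
    refine integral_congr fun θ _ => ?_
    have hr := sqrt_pos.2 (hu θ)
    have hr2 := sq_sqrt (hu θ).le
    set r := √(1 - m * sin θ ^ 2)
    rw [← hr2]
    field_simp
    linear_combination (r ^ 2 + m - m * sin θ ^ 2) * hr2
  rw [integral_const_mul, hG, mul_zero, integral_sub, integral_sub, integral_const_mul,
    integral_const_mul] at key
  · rw [Eel, Kel]
    linear_combination key
  all_goals
    exact hcont (by fun_prop (disch := intro θ; have := hu θ; positivity))

lemma hasDerivAt_Eel_integral {m : ℝ} (hm : m < 1) :
    HasDerivAt Eel (∫ θ in (0:ℝ)..π / 2, -(sin θ ^ 2 * (1 / (2 * √(1 - m * sin θ ^ 2))))) m :=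
  hasDerivAt_integral_comp_one_sub_mul_sin_sq (fun _ ht => hasDerivAt_sqrt ht.ne')
    (by fun_prop (disch := intro t ht; have : 0 < t := ht; positivity)) hm

lemma hasDerivAt_one_div_sqrt {t : ℝ} (ht : 0 < t) :
    HasDerivAt (fun t => 1 / √t) (-(1 / (2 * t * √t))) t := by
  have h := (hasDerivAt_sqrt ht.ne').inv (sqrt_pos.2 ht).ne'
  simp only [one_div] at h ⊢
  refine h.congr_deriv ?_
  rw [sq_sqrt ht.le]
  field_simp

lemma hasDerivAt_Kel_integral {m : ℝ} (hm : m < 1) :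
    HasDerivAt Kel (∫ θ in (0:ℝ)..π / 2,
      -(sin θ ^ 2 * -(1 / (2 * (1 - m * sin θ ^ 2) * √(1 - m * sin θ ^ 2))))) m :=
  hasDerivAt_integral_comp_one_sub_mul_sin_sq (fun _ ht => hasDerivAt_one_div_sqrt ht)
    (by fun_prop (disch := intro t ht; have : 0 < t := ht; positivity)) hm

lemma hasDerivAt_Eel {m : ℝ} (hm₀ : m ≠ 0) (hm : m < 1) :
    HasDerivAt Eel ((Eel m - Kel m) / (2 * m)) m := by
  refine (hasDerivAt_Eel_integral hm).congr_deriv ?_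
  have h : ∫ θ in (0:ℝ)..π / 2, -(sin θ ^ 2 * (1 / (2 * √(1 - m * sin θ ^ 2)))) =
      -(1 / 2) * ∫ θ in (0:ℝ)..π / 2, sin θ ^ 2 / √(1 - m * sin θ ^ 2) := by
    rw [← integral_const_mul]
    exact integral_congr fun θ _ => by ring
  rw [h, eq_div_iff (by positivity)]
  linear_combination Kel_sub_Eel hm

lemma hasDerivAt_Kel {m : ℝ} (hm₀ : m ≠ 0) (hm : m < 1) :
    HasDerivAt Kel ((Eel m - (1 - m) * Kel m) / (2 * m * (1 - m))) m := by
  refine (hasDerivAt_Kel_integral hm).congr_deriv ?_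
  have h : ∫ θ in (0:ℝ)..π / 2,
      -(sin θ ^ 2 * -(1 / (2 * (1 - m * sin θ ^ 2) * √(1 - m * sin θ ^ 2)))) =
      1 / 2 * ∫ θ in (0:ℝ)..π / 2, sin θ ^ 2 / ((1 - m * sin θ ^ 2) * √(1 - m * sin θ ^ 2)) := by
    rw [← integral_const_mul]
    exact integral_congr fun θ _ => by field_simp
  have : 1 - m ≠ 0 := by linarith
  rw [h, eq_div_iff (by positivity)]
  linear_combination -Eel_sub_mul_Kel hm

lemma Eel_lt_Kel {m : ℝ} (hm : m ∈ Ioo (0:ℝ) 1) : Eel m < Kel m := by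
  have hu := one_sub_mul_sin_sq_pos hm.2
  have hS := integral_sin_sq_div_pos (by fun_prop) fun θ => sqrt_pos.2 (hu θ)
  have := mul_pos hm.1 hS
  linarith [Kel_sub_Eel hm.2]

lemma one_sub_mul_Kel_lt_Eel {m : ℝ} (hm : m ∈ Ioo (0:ℝ) 1) : (1 - m) * Kel m < Eel m := by
  have hu := one_sub_mul_sin_sq_pos hm.2
  have hT := integral_sin_sq_div_pos (by fun_prop) fun θ => mul_pos (hu θ) (sqrt_pos.2 (hu θ))
  have := mul_pos (mul_pos hm.1 (sub_pos.2 hm.2)) hT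
  linarith [Eel_sub_mul_Kel hm.2]

noncomputable def ellipticForm (m : ℝ) : ℝ :=
  3 * Eel m ^ 2 + (1 - m) * Kel m ^ 2 + 2 * (m - 2) * Eel m * Kel m

lemma ellipticForm_zero : ellipticForm 0 = 0 := by
  norm_num [ellipticForm, Eel, Kel]
  ring

lemma continuousAt_ellipticForm {m : ℝ} (hm : m < 1) : ContinuousAt ellipticForm m := by
  have hE := (hasDerivAt_Eel_integral hm).continuousAt
  have hK := (hasDerivAt_Kel_integral hm).continuousAt
  unfold ellipticForm
  fun_prop

lemma hasDerivAt_ellipticForm {m : ℝ} (hm : m ∈ Ioo (0:ℝ) 1) :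
    HasDerivAt ellipticForm
      (((1 - m) * Kel m - Eel m) * ((1 - m) * (Kel m - Eel m) + m * Eel m) / (m * (1 - m))) m := by
  have hm₀ : m ≠ 0 := hm.1.ne'
  have hm₁ : 1 - m ≠ 0 := by linarith [hm.2]
  have hE := hasDerivAt_Eel hm₀ hm.2
  have hK := hasDerivAt_Kel hm₀ hm.2
  have h := ((hE.pow 2).const_mul 3).add (((hasDerivAt_id m).const_sub 1).mul (hK.pow 2)) |>.add
    (((((hasDerivAt_id m).sub_const 2).const_mul 2).mul hE).mul hK)
  refine h.congr_deriv ?_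
  simp only [Pi.mul_apply, Pi.pow_apply, id]
  field_simp
  ring

lemma deriv_ellipticForm_neg {m : ℝ} (hm : m ∈ Ioo (0:ℝ) 1) : deriv ellipticForm m < 0 := by
  have h₁ := Eel_lt_Kel hm
  have h₂ := one_sub_mul_Kel_lt_Eel hm
  have hm₁ : 0 < 1 - m := sub_pos.2 hm.2
  have h₃ : 0 < (1 - m) * (Kel m - Eel m) := mul_pos hm₁ (sub_pos.2 h₁)
  rw [(hasDerivAt_ellipticForm hm).deriv]
  exact div_neg_of_neg_of_pos (mul_neg_of_neg_of_pos (by linarith) (by linarith))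
    (mul_pos hm.1 hm₁)

lemma strictAntiOn_ellipticForm : StrictAntiOn ellipticForm (Ico 0 1) := by
  refine strictAntiOn_of_deriv_neg (convex_Ico 0 1)
    (fun x hx => (continuousAt_ellipticForm hx.2).continuousWithinAt) fun x hx => ?_
  rw [interior_Ico] at hx
  exact deriv_ellipticForm_neg hx

/-- For every m ∈ (0,1), 3E(m)² + (1−m)K(m)² + 2(m−2)E(m)K(m) < 0. -/
theorem stmt11 (m : ℝ) (hm : m ∈ Set.Ioo (0:ℝ) 1) :
    3 * Eel m ^ 2 + (1 - m) * Kel m ^ 2 + 2 * (m - 2) * Eel m * Kel m < 0 := by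
  have h := strictAntiOn_ellipticForm (left_mem_Ico.2 one_pos) ⟨hm.1.le, hm.2⟩ hm.1
  rwa [ellipticForm_zero] at h
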